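/- For H > 0, with M(H,u,ξ) = (1/(gπ))·max(0, 2gH − (ξ−u)²)^{1/2} and H_K(f,ξ,z) = (ξ²/2)·f + (g²π²/6)·f³ + g·z·f, one has ∫_ℝ ξ·H_K(M(H,u,ξ), ξ, z_b) dξ = u·((H/2)·u² + (g/2)·H² + g·H·z_b + (g/2)·H²). -/

import Mathlib

/-!
With `a ^ 2 = 2 g H` and `x = ξ - u`, the identity `√t ^ 3 = t √t` turns the integrand into
`(g π)⁻¹ P(x) √(a ^ 2 - x ^ 2)` for a cubic polynomial `P`. Against the semicircle
`√(a ^ 2 - x ^ 2)` the odd moments vanish by symmetry, and the substitution `x = a sin θ`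
gives the even ones: `π a ^ 2 / 2` and `π a ^ 4 / 8`.
-/

open MeasureTheory Real

lemma sqrt_max_zero_left (t : ℝ) : √(max 0 t) = √t := by
  rcases le_total t 0 with h | h
  · rw [max_eq_left h, sqrt_zero, sqrt_eq_zero_of_nonpos h]
  · rw [max_eq_right h]

lemma sqrt_pow_three (t : ℝ) : √t ^ 3 = t * √t := by
  rcases le_total t 0 with h | h
  · rw [sqrt_eq_zero_of_nonpos h, zero_pow three_ne_zero, mul_zero]
  · rw [pow_succ, sq_sqrt h]

section Semicircle

variable {a : ℝ}

lemma hasCompactSupport_sqrt_sq_sub_sq (a : ℝ) :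
    HasCompactSupport fun x : ℝ => √(a ^ 2 - x ^ 2) :=
  HasCompactSupport.intro (isCompact_Icc (a := -|a|) (b := |a|)) fun x hx => by
    rw [Set.mem_Icc, ← abs_le, not_le] at hx
    exact sqrt_eq_zero_of_nonpos (sub_nonpos.2 (sq_lt_sq.2 hx).le)

lemma Continuous.integrable_mul_sqrt_sq_sub_sq {f : ℝ → ℝ} (hf : Continuous f) :
    Integrable fun x => f x * √(a ^ 2 - x ^ 2) :=
  (hf.mul (by fun_prop)).integrable_of_hasCompactSupport
    (hasCompactSupport_sqrt_sq_sub_sq a).mul_left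

lemma integral_mul_sqrt_sq_sub_sq (ha : 0 ≤ a) {f : ℝ → ℝ} (hf : Continuous f) :
    ∫ x, f x * √(a ^ 2 - x ^ 2) =
      ∫ θ in -(π / 2)..π / 2, f (a * sin θ) * (a * cos θ) ^ 2 := by
  have hout : ∀ x ∉ Set.Ioc (-a) a, f x * √(a ^ 2 - x ^ 2) = 0 := fun x hx => by
    rw [Set.mem_Ioc, not_and_or, not_lt, not_le] at hx
    have : a ^ 2 ≤ x ^ 2 := by rcases hx with h | h <;> nlinarith
    rw [sqrt_eq_zero_of_nonpos (sub_nonpos.2 this), mul_zero]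
  calc ∫ x, f x * √(a ^ 2 - x ^ 2)
      = ∫ x in a * sin (-(π / 2))..a * sin (π / 2), f x * √(a ^ 2 - x ^ 2) := by
        rw [sin_neg, sin_pi_div_two, mul_neg_one, mul_one,
          intervalIntegral.integral_of_le (by linarith),
          setIntegral_eq_integral_of_forall_compl_eq_zero hout]
    _ = ∫ θ in -(π / 2)..π / 2,
          f (a * sin θ) * √(a ^ 2 - (a * sin θ) ^ 2) * (a * cos θ) :=
        (intervalIntegral.integral_comp_mul_deriv (fun θ _ => (hasDerivAt_sin θ).const_mul a)
          (by fun_prop) (hf.mul (by fun_prop))).symm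
    _ = ∫ θ in -(π / 2)..π / 2, f (a * sin θ) * (a * cos θ) ^ 2 := by
        refine intervalIntegral.integral_congr fun θ hθ => ?_
        rw [Set.uIcc_of_le (by linarith [pi_pos])] at hθ
        have hcos : 0 ≤ a * cos θ := mul_nonneg ha (cos_nonneg_of_mem_Icc hθ)
        rw [show a ^ 2 - (a * sin θ) ^ 2 = (a * cos θ) ^ 2 by
          linear_combination (-a ^ 2) * sin_sq_add_cos_sq θ, sqrt_sq hcos]
        ring

lemma integral_pow_mul_sqrt_sq_sub_sq_of_odd {n : ℕ} (hn : Odd n) :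
    ∫ x, x ^ n * √(a ^ 2 - x ^ 2) = 0 := by
  have h := integral_neg_eq_self (fun x => x ^ n * √(a ^ 2 - x ^ 2)) volume
  simp only [hn.neg_pow, neg_sq, neg_mul, integral_neg] at h
  linarith

lemma integral_sqrt_sq_sub_sq (a : ℝ) : ∫ x, √(a ^ 2 - x ^ 2) = π * a ^ 2 / 2 := by
  rw [← sq_abs a]
  have h := integral_mul_sqrt_sq_sub_sq (abs_nonneg a) (f := fun _ => 1) continuous_const
  simp only [one_mul] at h
  simp_rw [h, mul_pow, intervalIntegral.integral_const_mul, integral_cos_sq, cos_neg,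
    cos_pi_div_two]
  ring

lemma integral_sq_mul_sqrt_sq_sub_sq (a : ℝ) :
    ∫ x, x ^ 2 * √(a ^ 2 - x ^ 2) = π * a ^ 4 / 8 := by
  rw [show a ^ 4 = (a ^ 2) ^ 2 by ring, ← sq_abs a,
    integral_mul_sqrt_sq_sub_sq (abs_nonneg a) (continuous_pow 2)]
  simp_rw [mul_pow, mul_mul_mul_comm, intervalIntegral.integral_const_mul,
    integral_sin_sq_mul_cos_sq, mul_neg, show 4 * (π / 2) = 2 * π by ring, sin_neg, sin_two_pi]
  ring

lemma integral_cubic_mul_sqrt_sq_sub_sq (a c₀ c₁ c₂ c₃ : ℝ) :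
    ∫ x, (c₀ + c₁ * x + c₂ * x ^ 2 + c₃ * x ^ 3) * √(a ^ 2 - x ^ 2) =
      π * a ^ 2 / 2 * (c₀ + c₂ * a ^ 2 / 4) := by
  have hintegrable {f : ℝ → ℝ} (hf : Continuous f) (c : ℝ) :
      Integrable fun x => c * (f x * √(a ^ 2 - x ^ 2)) :=
    hf.integrable_mul_sqrt_sq_sub_sq.const_mul c
  have h₀ : Integrable fun x => c₀ * √(a ^ 2 - x ^ 2) :=
    continuous_const.integrable_mul_sqrt_sq_sub_sq
  have h₁ := hintegrable continuous_id c₁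
  have h₂ := hintegrable (continuous_pow 2) c₂
  have h₃ := hintegrable (continuous_pow 3) c₃
  have hodd₁ : ∫ x, x * √(a ^ 2 - x ^ 2) = 0 := by
    simpa using integral_pow_mul_sqrt_sq_sub_sq_of_odd (a := a) odd_one
  simp only [add_mul, mul_assoc]
  rw [integral_add, integral_add, integral_add]
  · simp only [integral_const_mul, integral_sqrt_sq_sub_sq, integral_sq_mul_sqrt_sq_sub_sq,
      hodd₁, integral_pow_mul_sqrt_sq_sub_sq_of_odd (show Odd 3 by decide)]
    ring
  exacts [h₀, h₁, h₀.add h₁, h₂, (h₀.add h₁).add h₂, h₃]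

end Semicircle

theorem stmt4 (g H u zb : ℝ) (hg : 0 < g) (hH : 0 < H) :
    (∫ ξ : ℝ, ξ *
        ((ξ ^ 2 / 2) * ((1 / (g * Real.pi)) * Real.sqrt (max 0 (2 * g * H - (ξ - u) ^ 2)))
          + (g ^ 2 * Real.pi ^ 2 / 6) *
              ((1 / (g * Real.pi)) * Real.sqrt (max 0 (2 * g * H - (ξ - u) ^ 2))) ^ 3
          + g * zb * ((1 / (g * Real.pi)) * Real.sqrt (max 0 (2 * g * H - (ξ - u) ^ 2))))) =
      u * (H / 2 * u ^ 2 + g / 2 * H ^ 2 + g * H * zb + g / 2 * H ^ 2) := by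
  have hgπ : g * π ≠ 0 := by positivity
  obtain ⟨a, ha⟩ : ∃ a, a ^ 2 = 2 * g * H := ⟨√(2 * g * H), sq_sqrt (by positivity)⟩
  have hpoint : ∀ ξ : ℝ, ξ * (ξ ^ 2 / 2 * (1 / (g * π) * √(max 0 (a ^ 2 - (ξ - u) ^ 2)))
      + g ^ 2 * π ^ 2 / 6 * (1 / (g * π) * √(max 0 (a ^ 2 - (ξ - u) ^ 2))) ^ 3
      + g * zb * (1 / (g * π) * √(max 0 (a ^ 2 - (ξ - u) ^ 2)))) =
      1 / (g * π) * ((u ^ 3 / 2 + g * zb * u + u * a ^ 2 / 6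
        + (3 * u ^ 2 / 2 + g * zb + a ^ 2 / 6) * (ξ - u) + 4 * u / 3 * (ξ - u) ^ 2
        + 1 / 3 * (ξ - u) ^ 3) * √(a ^ 2 - (ξ - u) ^ 2)) := by
    intro ξ
    rw [sqrt_max_zero_left, mul_pow, sqrt_pow_three]
    field_simp
    ring
  simp only [← ha, hpoint, integral_const_mul]
  rw [integral_sub_right_eq_self (fun x => (u ^ 3 / 2 + g * zb * u + u * a ^ 2 / 6
        + (3 * u ^ 2 / 2 + g * zb + a ^ 2 / 6) * x + 4 * u / 3 * x ^ 2
        + 1 / 3 * x ^ 3) * √(a ^ 2 - x ^ 2)), integral_cubic_mul_sqrt_sq_sub_sq, ha]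
  field_simp
  ring
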